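/- Let (B₀,B₁) be a Banach couple and let f ∈ 𝔽_𝔸(B₀,B₁). For each n ∈ ℤ, the value of the integral (1/2π)∫₀^{2π} e^{−n(α+it)} f(e^{α+it}) dt (an element of B₀+B₁) is the same for every α ∈ [0,1]; moreover this common value f̂(n) belongs to B₀ ∩ B₁. -/

import Mathlib

open MeasureTheory Complex Filter Set
noncomputable section

/-- The closed annulus `𝔸 = {z : 1 ≤ |z| ≤ e}`. -/
def Ann : Set ℂ := {z | 1 ≤ ‖z‖ ∧ ‖z‖ ≤ Real.exp 1}

/-- The interior of the annulus, `{z : 1 < |z| < e}`. -/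
def AnnInt : Set ℂ := {z | 1 < ‖z‖ ∧ ‖z‖ < Real.exp 1}

section Couple

variable {B₀ B₁ S : Type*}
  [NormedAddCommGroup B₀] [NormedSpace ℂ B₀]
  [NormedAddCommGroup B₁] [NormedSpace ℂ B₁]
  [NormedAddCommGroup S] [NormedSpace ℂ S]

/-- A Banach couple `(B₀,B₁)`, presented through its sum `S = B₀ + B₁`: the Banach spaces
`B₀`, `B₁` are continuously and injectively embedded (via `j₀`, `j₁`) in the Banach space
`S`, every element of `S` is a sum `j₀ b₀ + j₁ b₁`, and the norm of `S` is the usual norm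
`‖s‖ = inf{‖b₀‖ + ‖b₁‖ : s = j₀ b₀ + j₁ b₁}` of the sum of a Banach couple.  (The common
ambient Hausdorff topological vector space may be taken to be `S` itself.) -/
structure IsBanachCouple (j₀ : B₀ →L[ℂ] S) (j₁ : B₁ →L[ℂ] S) : Prop where
  inj₀ : Function.Injective j₀
  inj₁ : Function.Injective j₁
  sum : ∀ s : S, ∃ b₀ b₁, s = j₀ b₀ + j₁ b₁
  norm_eq : ∀ s : S,
    ‖s‖ = sInf {c : ℝ | ∃ b₀ b₁, s = j₀ b₀ + j₁ b₁ ∧ c = ‖b₀‖ + ‖b₁‖}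

/-- `f ∈ 𝔽_𝔸(B₀,B₁)` : `f : 𝔸 → B₀+B₁` is continuous on `𝔸`, analytic in the interior of
`𝔸`, and its restriction to the circle `e^j𝕋` is a continuous map into `B_j`, `j = 0,1`. -/
def MemFA (j₀ : B₀ →L[ℂ] S) (j₁ : B₁ →L[ℂ] S) (f : ℂ → S) : Prop :=
  ContinuousOn f Ann ∧ DifferentiableOn ℂ f AnnInt ∧
  (∃ g₀ : ℝ → B₀, Continuous g₀ ∧
    ∀ t : ℝ, f (Complex.exp ((t : ℂ) * Complex.I)) = j₀ (g₀ t)) ∧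
  (∃ g₁ : ℝ → B₁, Continuous g₁ ∧
    ∀ t : ℝ, f (Complex.exp (1 + (t : ℂ) * Complex.I)) = j₁ (g₁ t))

/-- The `n`-th Laurent coefficient of `f`, computed on the circle of radius `e^α`:
`(1/2π) ∫₀^{2π} e^{-n(α+it)} f(e^{α+it}) dt`. -/
noncomputable def fhat (f : ℂ → S) (n : ℤ) (α : ℝ) : S :=
  (1 / (2 * Real.pi) : ℂ) •
    ∫ t in (0:ℝ)..(2 * Real.pi),
      Complex.exp (-(n : ℂ) * ((α : ℂ) + (t : ℂ) * Complex.I)) •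
        f (Complex.exp ((α : ℂ) + (t : ℂ) * Complex.I))

end Couple

/-
The function `z ↦ z ^ (-(n+1)) • f z` is holomorphic on the open annulus and continuous on its
closure, so by Cauchy's theorem its integrals over the circles `|z| = e^α`, `α ∈ [0, 1]`, all
agree; up to the factor `1/(2πi)` these integrals are the coefficients `f̂(n)`. On `|z| = 1` the
function `f` factors continuously through `j₀`, and continuous linear maps commute with
integrals, so `f̂(n)` is `j₀` of a `B₀`-valued integral; likewise on `|z| = e` with `j₁`.
-/

open Real Metric

lemma circleMap_zero_exp (α t : ℝ) :
    circleMap 0 (Real.exp α) t = Complex.exp (α + t * I) := by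
  simp [circleMap, Complex.exp_add, Complex.ofReal_exp]

section Coefficients

variable {S : Type*} [NormedAddCommGroup S] [NormedSpace ℂ S]

lemma fhat_eq_circleIntegral (f : ℂ → S) (n : ℤ) (α : ℝ) :
    fhat f n α = (2 * π * I)⁻¹ • ∮ z in C(0, Real.exp α), z ^ (-(n + 1)) • f z := by
  rw [fhat, circleIntegral, ← intervalIntegral.integral_smul, ← intervalIntegral.integral_smul]
  refine intervalIntegral.integral_congr fun t _ => ?_
  have hpow (w : ℂ) : Complex.exp (-n * w) = Complex.exp w ^ (-(n + 1)) * Complex.exp w := by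
    rw [← zpow_add_one₀ (Complex.exp_ne_zero w), show -(n + 1) + 1 = -n by ring,
      ← Complex.exp_int_mul]
    push_cast; ring_nf
  simp only [deriv_circleMap, circleMap_zero_exp, smul_smul, hpow]
  congr 1
  field_simp [I_ne_zero]

lemma circleIntegral_zpow_smul_eq_of_annulus {f : ℂ → S} {r R : ℝ} (hr : 0 < r) (hrR : r ≤ R)
    (hc : ContinuousOn f (closedBall 0 R \ ball 0 r))
    (hd : DifferentiableOn ℂ f (ball 0 R \ closedBall 0 r)) (k : ℤ) :
    (∮ z in C(0, R), z ^ k • f z) = ∮ z in C(0, r), z ^ k • f z := by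
  have hne {z : ℂ} (hz : z ∉ ball 0 r) : z ≠ 0 := by
    rintro rfl
    exact hz (mem_ball_self hr)
  refine circleIntegral_eq_of_differentiable_on_annulus_off_countable hr hrR countable_empty
    ((continuousOn_id.zpow₀ k fun z hz => Or.inl (hne hz.2)).smul hc) fun z hz => ?_
  have hz : z ∈ ball 0 R \ closedBall 0 r := hz.1
  exact (differentiableAt_zpow.2 (Or.inl (hne fun h => hz.2 (ball_subset_closedBall h)))).smul
    (hd.differentiableAt ((isOpen_ball.sdiff isClosed_closedBall).mem_nhds hz))

lemma fhat_eq_fhat_zero {f : ℂ → S} (hc : ContinuousOn f Ann) (hd : DifferentiableOn ℂ f AnnInt)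
    (n : ℤ) {α : ℝ} (hα : α ∈ Icc (0 : ℝ) 1) : fhat f n α = fhat f n 0 := by
  have hexp : Real.exp α ≤ Real.exp 1 := Real.exp_le_exp.2 hα.2
  have hc' : ContinuousOn f (closedBall 0 (Real.exp α) \ ball 0 1) :=
    hc.mono fun z ⟨h1, h2⟩ => by
      simp only [mem_closedBall_zero_iff, mem_ball_zero_iff, not_lt] at h1 h2
      exact ⟨h2, h1.trans hexp⟩
  have hd' : DifferentiableOn ℂ f (ball 0 (Real.exp α) \ closedBall 0 1) :=
    hd.mono fun z ⟨h1, h2⟩ => by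
      simp only [mem_closedBall_zero_iff, mem_ball_zero_iff, not_le] at h1 h2
      exact ⟨h2, h1.trans_le hexp⟩
  rw [fhat_eq_circleIntegral, fhat_eq_circleIntegral, Real.exp_zero,
    circleIntegral_zpow_smul_eq_of_annulus one_pos (Real.one_le_exp hα.1) hc' hd']

lemma exists_apply_eq_fhat [CompleteSpace S] {E : Type*} [NormedAddCommGroup E] [NormedSpace ℂ E]
    [CompleteSpace E] (j : E →L[ℂ] S) {f : ℂ → S} {g : ℝ → E} (hg : Continuous g) {α : ℝ}
    (hfg : ∀ t : ℝ, f (Complex.exp (α + t * I)) = j (g t)) (n : ℤ) :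
    ∃ b : E, j b = fhat f n α := by
  have hcont : Continuous fun t : ℝ => Complex.exp (-n * (α + t * I)) • g t := by fun_prop
  refine ⟨(1 / (2 * π) : ℂ) • ∫ t in (0 : ℝ)..2 * π, Complex.exp (-n * (α + t * I)) • g t, ?_⟩
  rw [j.map_smul, ← j.intervalIntegral_comp_comm (hcont.intervalIntegrable _ _), fhat]
  simp only [j.map_smul, hfg]

end Coefficients

theorem stmt7_general {B₀ B₁ S : Type*}
    [NormedAddCommGroup B₀] [NormedSpace ℂ B₀] [CompleteSpace B₀]
    [NormedAddCommGroup B₁] [NormedSpace ℂ B₁] [CompleteSpace B₁]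
    [NormedAddCommGroup S] [NormedSpace ℂ S] [CompleteSpace S]
    (j₀ : B₀ →L[ℂ] S) (j₁ : B₁ →L[ℂ] S)
    (f : ℂ → S) (hf : MemFA j₀ j₁ f) (n : ℤ) :
    ∃ c : S, (∀ α ∈ Set.Icc (0 : ℝ) 1, fhat f n α = c) ∧
      (∃ b₀ : B₀, j₀ b₀ = c) ∧ (∃ b₁ : B₁, j₁ b₁ = c) := by
  obtain ⟨hc, hd, ⟨g₀, hg₀, hfg₀⟩, ⟨g₁, hg₁, hfg₁⟩⟩ := hf
  have hconst := fun α (hα : α ∈ Icc (0 : ℝ) 1) => fhat_eq_fhat_zero hc hd n hα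
  refine ⟨fhat f n 0, hconst, exists_apply_eq_fhat j₀ hg₀ (α := 0) (by simpa using hfg₀) n, ?_⟩
  obtain ⟨b₁, hb₁⟩ := exists_apply_eq_fhat j₁ hg₁ (α := 1) (by simpa using hfg₁) n
  exact ⟨b₁, hb₁.trans (hconst 1 ⟨zero_le_one, le_rfl⟩)⟩

/-- **Statement 7.**  For a Banach couple `(B₀,B₁)` and `f ∈ 𝔽_𝔸(B₀,B₁)`, the Laurent
coefficient `(1/2π)∫₀^{2π} e^{-n(α+it)} f(e^{α+it}) dt ∈ B₀+B₁` is the same for every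
`α ∈ [0,1]`, and this common value belongs to `B₀ ∩ B₁`. -/
theorem stmt7 {B₀ B₁ S : Type*}
    [NormedAddCommGroup B₀] [NormedSpace ℂ B₀] [CompleteSpace B₀]
    [NormedAddCommGroup B₁] [NormedSpace ℂ B₁] [CompleteSpace B₁]
    [NormedAddCommGroup S] [NormedSpace ℂ S] [CompleteSpace S]
    (j₀ : B₀ →L[ℂ] S) (j₁ : B₁ →L[ℂ] S) (hc : IsBanachCouple j₀ j₁)
    (f : ℂ → S) (hf : MemFA j₀ j₁ f) (n : ℤ) :
    ∃ c : S, (∀ α ∈ Set.Icc (0 : ℝ) 1, fhat f n α = c) ∧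
      (∃ b₀ : B₀, j₀ b₀ = c) ∧ (∃ b₁ : B₁, j₁ b₁ = c) :=
  stmt7_general j₀ j₁ f hf n
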